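/- arXiv:1607.04474 — 2 statements merged into one kernel-verified Lean document; each statement's English description precedes it below -/
import Mathlib

section
/- Let f: {0,1}^n → {0,1} be canalizing in x_1 with canalizing input a and output b, with restriction g(x_2,…,x_n) = f(1-a, x_2,…,x_n). Then for every j ≥ 2, the activity of x_j in f equals half the activity of x_j in g: α_j^f = (1/2) α_{j-1}^g. -/
open Finset

/-- `flipSet x I` flips the coordinates of `x` in the index set `I` (the vector `x ⊕ e_I`). -/
def flipSet {n : ℕ} (x : Fin n → Bool) (I : Finset (Fin n)) : Fin n → Bool :=
  fun j => if j ∈ I then !(x j) else x j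

/-- The activity `α_i^f` of variable `i` in `f`. -/
def activity {n : ℕ} (f : (Fin n → Bool) → Bool) (i : Fin n) : ℚ :=
  ((univ.filter fun x : Fin n → Bool => f x ≠ f (flipSet x {i})).card : ℚ) / 2 ^ n

/-- The average sensitivity `S^f` of `f`. -/
def avgSens {n : ℕ} (f : (Fin n → Bool) → Bool) : ℚ :=
  (∑ x : Fin n → Bool, ((univ.filter fun i : Fin n => f x ≠ f (flipSet x {i})).card : ℚ)) / 2 ^ n

/-- The `c`-sensitivity `S_c^f(x)` of `f` at `x`. -/
def cSensAt {n : ℕ} (f : (Fin n → Bool) → Bool) (c : ℕ) (x : Fin n → Bool) : ℕ :=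
  (univ.filter fun I : Finset (Fin n) => I.card = c ∧ f x ≠ f (flipSet x I)).card

/-- The average `c`-sensitivity `S_c^f` of `f`. -/
def avgCSens {n : ℕ} (f : (Fin n → Bool) → Bool) (c : ℕ) : ℚ :=
  (∑ x : Fin n → Bool, (cSensAt f c x : ℚ)) / 2 ^ n

/-- For a function canalizing in its first variable with input `a` and output `b`,
the activity of any other variable is half the activity of the corresponding variable
in the restriction `g(z) = f(!a, z)`. -/
theorem activity_noncanalizing_variable {n : ℕ} (f : (Fin (n + 1) → Bool) → Bool) (a b : Bool)
    (h1 : ∀ x : Fin (n + 1) → Bool, x 0 = a → f x = b)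
    (h2 : ∃ z : Fin n → Bool, f (Fin.cons (!a) z) ≠ b) :
    ∀ j : Fin n,
      activity f j.succ = (1 / 2) * activity (fun z : Fin n → Bool => f (Fin.cons (!a) z)) j := by
  intro j
  have hcons : ∀ z : Fin n → Bool,
      flipSet (Fin.cons (!a) z) {j.succ} = Fin.cons (!a) (flipSet z {j}) := by
    intro z
    funext i
    refine Fin.cases ?_ (fun i => ?_) i
    · simp [flipSet, (Fin.succ_ne_zero j).symm]
    · simp [flipSet, Fin.succ_inj]
  have hcard :
      (univ.filter fun x : Fin (n + 1) → Bool => f x ≠ f (flipSet x {j.succ})).card =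
      (univ.filter fun z : Fin n → Bool =>
        f (Fin.cons (!a) z) ≠ f (flipSet (Fin.cons (!a) z) {j.succ})).card := by
    apply Finset.card_bij (fun x _ => Fin.tail x)
    · intro x hx
      simp only [mem_filter, mem_univ, true_and] at hx ⊢
      have hx0 : x 0 = !a := by
        by_contra h
        have hxa : x 0 = a := by cases a <;> cases hx0 : x 0 <;> simp_all
        have h0 : flipSet x {j.succ} 0 = a := by
          simpa [flipSet, (Fin.succ_ne_zero j).symm] using hxa
        exact hx (by rw [h1 x hxa, h1 _ h0])
      have hxe : Fin.cons (!a) (Fin.tail x) = x := by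
        funext i
        refine Fin.cases ?_ (fun i => ?_) i
        · simp [hx0]
        · simp [Fin.tail]
      rw [hxe]; exact hx
    · intro x hx y hy hxy
      simp only [mem_filter, mem_univ, true_and] at hx hy
      have hx0 : x 0 = !a := by
        by_contra h
        have hxa : x 0 = a := by cases a <;> cases hx0 : x 0 <;> simp_all
        have h0 : flipSet x {j.succ} 0 = a := by
          simpa [flipSet, (Fin.succ_ne_zero j).symm] using hxa
        exact hx (by rw [h1 x hxa, h1 _ h0])
      have hy0 : y 0 = !a := by
        by_contra h
        have hya : y 0 = a := by cases a <;> cases hy0 : y 0 <;> simp_all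
        have h0 : flipSet y {j.succ} 0 = a := by
          simpa [flipSet, (Fin.succ_ne_zero j).symm] using hya
        exact hy (by rw [h1 y hya, h1 _ h0])
      funext i
      refine Fin.cases ?_ (fun i => ?_) i
      · rw [hx0, hy0]
      · exact congrFun hxy i
    · intro z hz
      refine ⟨Fin.cons (!a) z, ?_, by simp [Fin.tail]⟩
      simp only [mem_filter, mem_univ, true_and] at hz ⊢
      exact hz
  simp only [activity, hcons] at *
  rw [hcard]
  ring
end

section
/- Let f: {0,1}^n → {0,1} be k-canalizing with canalizing variables x_1,…,x_k (inputs a_1,…,a_k, outputs b_1,…,b_k) and non-canalizing part g on x_{k+1},…,x_n with g ≢ b_k. Then for any non-canalizing variable x_j (j > k), the activity satisfies α_j^f = (1/2^k)·P(g(z) ≠ g(z ⊕ e_{j-k})) where z is uniform on {0,1}^{n-k}. -/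
open Finset

/-- For a `k`-canalizing function `f` on `k + m` variables (canalizing variables first,
with inputs `a`, outputs `b`, and non-canalizing part `g ≢ b_k`), the activity of a
non-canalizing variable `x_j` is `(1/2^k) · P(g(z) ≠ g(z ⊕ e_j))`. -/
theorem activity_noncanalizing_of_kcanalizing {k m : ℕ} (hk : 0 < k)
    (f : (Fin (k + m) → Bool) → Bool) (a b : Fin k → Bool) (g : (Fin m → Bool) → Bool)
    (hf1 : ∀ x : Fin (k + m) → Bool, (∀ i : Fin k, x (Fin.castAdd m i) ≠ a i) →
      f x = g fun t => x (Fin.natAdd k t))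
    (hf2 : ∀ x : Fin (k + m) → Bool, ∀ i : Fin k,
      (∀ i' : Fin k, i' < i → x (Fin.castAdd m i') ≠ a i') →
      x (Fin.castAdd m i) = a i → f x = b i)
    (hg : ∃ z : Fin m → Bool, g z ≠ b ⟨k - 1, Nat.sub_lt hk Nat.one_pos⟩) :
    ∀ j : Fin m,
      activity f (Fin.natAdd k j) =
        (1 / 2 ^ k) *
          (((univ.filter fun z : Fin m → Bool => g z ≠ g (flipSet z {j})).card : ℚ) / 2 ^ m) := by
  intro j
  classical
  have hcn : ∀ i : Fin k, (Fin.castAdd m i : Fin (k+m)) ≠ Fin.natAdd k j := by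
    intro i h
    have := congrArg Fin.val h
    simp [Fin.castAdd, Fin.natAdd] at this
    omega
  have hcoord : ∀ (x : Fin (k+m) → Bool) (i : Fin k),
      flipSet x {Fin.natAdd k j} (Fin.castAdd m i) = x (Fin.castAdd m i) := by
    intro x i; simp [flipSet, hcn i]
  have hrestr : ∀ x : Fin (k+m) → Bool,
      (fun t => flipSet x {Fin.natAdd k j} (Fin.natAdd k t))
        = flipSet (fun t => x (Fin.natAdd k t)) {j} := by
    intro x
    funext t'
    by_cases h : t' = j
    · subst h; simp [flipSet]
    · have hv : (t' : ℕ) ≠ (j : ℕ) := fun hh => h (Fin.ext hh)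
      have hne : (Fin.natAdd k t' : Fin (k+m)) ≠ Fin.natAdd k j := by
        simp [Fin.ext_iff]; omega
      simp [flipSet, hne, h]
  have hfval : ∀ x : Fin (k+m) → Bool, (∀ i : Fin k, x (Fin.castAdd m i) ≠ a i) →
      f (flipSet x {Fin.natAdd k j}) = g (flipSet (fun t => x (Fin.natAdd k t)) {j}) := by
    intro x hx
    rw [hf1 _ (fun i => by rw [hcoord]; exact hx i), hrestr]
  have hall : ∀ x : Fin (k+m) → Bool, f x ≠ f (flipSet x {Fin.natAdd k j}) →
      ∀ i : Fin k, x (Fin.castAdd m i) ≠ a i := by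
    intro x hx
    by_contra hlem
    push_neg at hlem
    obtain ⟨i, hi⟩ := hlem
    have hTne : (univ.filter (fun i : Fin k => x (Fin.castAdd m i) = a i)).Nonempty :=
      ⟨i, by simp [hi]⟩
    have hi0T := Finset.min'_mem _ hTne
    set i0 := (univ.filter (fun i : Fin k => x (Fin.castAdd m i) = a i)).min' hTne with hi0
    have hi0a : x (Fin.castAdd m i0) = a i0 := by simpa using hi0T
    have hlt : ∀ i' : Fin k, i' < i0 → x (Fin.castAdd m i') ≠ a i' := by
      intro i' h hi'
      exact absurd (Finset.min'_le _ i' (by simp [hi'])) (not_le.mpr h)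
    have h1 := hf2 x i0 hlt hi0a
    have h2 := hf2 (flipSet x {Fin.natAdd k j}) i0
      (fun i' h => by rw [hcoord]; exact hlt i' h) (by rw [hcoord]; exact hi0a)
    exact hx (h1.trans h2.symm)
  have hcard : (univ.filter fun x : Fin (k+m) → Bool => f x ≠ f (flipSet x {Fin.natAdd k j})).card
      = (univ.filter fun z : Fin m → Bool => g z ≠ g (flipSet z {j})).card := by
    apply Finset.card_bij (fun x _ => fun t => x (Fin.natAdd k t))
    · intro x hx
      simp only [mem_filter, mem_univ, true_and] at hx ⊢
      have e1 : f x = g (fun t => x (Fin.natAdd k t)) := hf1 x (hall x hx)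
      have e2 := hfval x (hall x hx)
      rw [← e1, ← e2]
      exact hx
    · intro x1 h1 x2 h2 he
      simp only [mem_filter, mem_univ, true_and] at h1 h2
      funext t
      refine Fin.addCases (fun i => ?_) (fun t' => ?_) t
      · have e1 : x1 (Fin.castAdd m i) = !(a i) := Bool.eq_not_iff.mpr (hall x1 h1 i)
        have e2 : x2 (Fin.castAdd m i) = !(a i) := Bool.eq_not_iff.mpr (hall x2 h2 i)
        rw [e1, e2]
      · exact congrFun he t'
    · intro z hz
      simp only [mem_filter, mem_univ, true_and] at hz
      refine ⟨Fin.addCases (fun i => !(a i)) z, ?_, ?_⟩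
      · simp only [mem_filter, mem_univ, true_and]
        have hne : ∀ i : Fin k,
            (Fin.addCases (fun i => !(a i)) z : Fin (k+m) → Bool) (Fin.castAdd m i) ≠ a i := by
          intro i; simp [Fin.addCases_left]
        have hz' : (fun t => (Fin.addCases (fun i => !(a i)) z : Fin (k+m) → Bool)
            (Fin.natAdd k t)) = z := by
          funext t; simp [Fin.addCases_right]
        have e1 := hf1 _ hne
        have e2 := hfval _ hne
        rw [e1, e2, hz']
        exact hz
      · funext t; simp [Fin.addCases_right]
  rw [activity, hcard, pow_add]
  ring
end
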